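/- arXiv:1802.07059 — 3 statements merged into one kernel-verified Lean document; each statement's English description precedes it below -/
import Mathlib

section
/- Let G be a finite simple graph and let J, J' be subsets of the vertex set of G such that the induced subgraphs G|_J and G|_{J'} are both connected and J ∩ J' is nonempty. If the induced subgraph G|_{J ∩ J'} is not connected, then there exists a subset I of the vertex set of G such that the induced subgraph G|_I is either a cycle with at least 4 vertices or a diamond graph (the complete graph on 4 vertices with one edge removed). -/
open SimpleGraph

def diamondGraph : SimpleGraph (Fin 4) := (completeGraph (Fin 4)).deleteEdges {s(2,3)}

/-
A cycle `c 0, …, c (k-1)` of `G` whose vertices do not form a clique contains a hole (an induced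
cycle of length at least 4) or an induced diamond. Without chords it is itself a hole. A chord
`c i c j` splits it into two shorter cycles, the arc `c i, …, c j` and the shortcut
`c 0, …, c i, c j, …, c (k-1)`, which cover it and share the chord; if one of them is not a clique
we recurse, and otherwise two non-adjacent vertices of the cycle lie on different sides and span a
diamond with the ends of the chord.

If `x, y` lie in different components of `G[J ∩ J']`, shortening a path from `x` to `y` in `G[J]`
at inner vertices in `J'` yields such a pair `u, v` joined by a path in `G[J]` meeting `J'` only at
its ends. Together with a path from `u` to `v` in `G[J']` it forms a cycle through the non-adjacent
vertices `u` and `v`.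
-/

namespace SimpleGraph

variable {V : Type*} {G : SimpleGraph V}

theorem cycleGraph_adj_iff_val {k : ℕ} (hk : 2 ≤ k) {p q : Fin k} :
    (cycleGraph k).Adj p q ↔ (q : ℕ) = p + 1 ∨ (p : ℕ) = q + 1 ∨
      ((p : ℕ) = 0 ∧ (q : ℕ) + 1 = k) ∨ ((q : ℕ) = 0 ∧ (p : ℕ) + 1 = k) := by
  have hp := p.isLt
  have hq := q.isLt
  rw [cycleGraph_adj']
  rcases lt_trichotomy p q with h | rfl | h
  · rw [Fin.coe_sub_iff_lt.mpr h, Fin.coe_sub_iff_le.mpr h.le]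
    have : (p : ℕ) < q := h
    omega
  · rw [Fin.coe_sub_iff_le.mpr le_rfl]
    omega
  · rw [Fin.coe_sub_iff_lt.mpr h, Fin.coe_sub_iff_le.mpr h.le]
    have : (q : ℕ) < p := h
    omega

theorem diamondGraph_isIndContained {a b x y : V} (hxy : G.Adj x y) (hax : G.Adj a x)
    (hay : G.Adj a y) (hbx : G.Adj b x) (hby : G.Adj b y) (hab : a ≠ b) (hnadj : ¬ G.Adj a b) :
    diamondGraph ⊴ G := by
  refine ⟨⟨⟨![x, y, a, b], fun i j h => ?_⟩, fun {i j} => ?_⟩⟩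
  · fin_cases i <;> fin_cases j <;> simp_all [hxy.ne, hax.ne, hay.ne, hbx.ne, hby.ne, eq_comm]
  · change G.Adj (![x, y, a, b] i) (![x, y, a, b] j) ↔ diamondGraph.Adj i j
    fin_cases i <;> fin_cases j <;> simp [diamondGraph, hxy, hax, hay, hbx, hby, hnadj,
      hxy.symm, hax.symm, hay.symm, hbx.symm, hby.symm, G.adj_comm b a]

theorem diamondGraph_isIndContained_of_isClique_union {A B : Set V} (hA : G.IsClique A)
    (hB : G.IsClique B) {x y : V} (hx : x ∈ A ∩ B) (hy : y ∈ A ∩ B) (hxy : x ≠ y)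
    (hAB : ¬ G.IsClique (A ∪ B)) : diamondGraph ⊴ G := by
  have : Std.Symm G.Adj := G.symm
  obtain ⟨a, ha, b, hb, hab, hnadj⟩ : ∃ a ∈ A, ∃ b ∈ B, a ≠ b ∧ ¬ G.Adj a b := by
    by_contra! h
    exact hAB (Set.pairwise_union_of_symm.2 ⟨hA, hB, h⟩)
  have haB : a ∉ B := fun h => hnadj (hB h hb hab)
  have hbA : b ∉ A := fun h => hnadj (hA ha h hab)
  exact diamondGraph_isIndContained (hA hx.1 hy.1 hxy)
    (hA ha hx.1 (by rintro rfl; exact haB hx.2)) (hA ha hy.1 (by rintro rfl; exact haB hy.2))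
    (hB hb hx.2 (by rintro rfl; exact hbA hx.1)) (hB hb hy.2 (by rintro rfl; exact hbA hy.1))
    hab hnadj

theorem image_Iio_subset_arc_union_shortcut (c : ℕ → V) {i j k : ℕ} (hij : i < j) (hjk : j < k) :
    c '' Set.Iio k ⊆ (fun l => c (i + l)) '' Set.Iio (j - i + 1) ∪
      (fun l => c (if l ≤ i then l else l + (j - i - 1))) '' Set.Iio (k - (j - i - 1)) := by
  rintro _ ⟨l, hl, rfl⟩
  rw [Set.mem_Iio] at hl
  rcases lt_or_ge l i with hli | hil
  · exact .inr ⟨l, Set.mem_Iio.2 (by omega), by simp [hli.le]⟩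
  rcases le_or_gt l j with hlj | hjl
  · exact .inl ⟨l - i, Set.mem_Iio.2 (by omega), by simp [show i + (l - i) = l by omega]⟩
  · exact .inr ⟨l - (j - i - 1), Set.mem_Iio.2 (by omega), by
      simp [show ¬ l - (j - i - 1) ≤ i by omega, show l - (j - i - 1) + (j - i - 1) = l by omega]⟩

structure IsCycleSeq (G : SimpleGraph V) (c : ℕ → V) (k : ℕ) : Prop where
  adj_succ : ∀ i, i + 1 < k → G.Adj (c i) (c (i + 1))
  adj_last : G.Adj (c (k - 1)) (c 0)
  injOn : Set.InjOn c (Set.Iio k)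

namespace IsCycleSeq

variable {c : ℕ → V} {k : ℕ}

theorem two_le (hc : G.IsCycleSeq c k) : 2 ≤ k := by
  by_contra h
  exact hc.adj_last.ne (by rw [show k - 1 = 0 by omega])

theorem arc (hc : G.IsCycleSeq c k) {i j : ℕ} (hij : i < j) (hjk : j < k)
    (hchord : G.Adj (c i) (c j)) : G.IsCycleSeq (fun l => c (i + l)) (j - i + 1) where
  adj_succ l hl := hc.adj_succ (i + l) (by omega)
  adj_last := by
    show G.Adj (c (i + (j - i + 1 - 1))) (c (i + 0))
    rw [show i + (j - i + 1 - 1) = j by omega, add_zero]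
    exact hchord.symm
  injOn l hl l' hl' h := by
    simp only [Set.mem_Iio] at hl hl'
    have := hc.injOn (show i + l < k by omega) (show i + l' < k by omega) h
    omega

theorem shortcut (hc : G.IsCycleSeq c k) {i j : ℕ} (hij : i < j) (hjk : j < k)
    (hchord : G.Adj (c i) (c j)) :
    G.IsCycleSeq (fun l => c (if l ≤ i then l else l + (j - i - 1))) (k - (j - i - 1)) where
  adj_succ l hl := by
    rcases lt_trichotomy l i with h | rfl | h
    · simpa [h.le, Nat.succ_le_of_lt h] using hc.adj_succ l (by omega)
    · simpa [show l + 1 + (j - l - 1) = j by omega] using hchord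
    · simpa [show ¬ l ≤ i by omega, show ¬ l + 1 ≤ i by omega,
        show l + 1 + (j - i - 1) = l + (j - i - 1) + 1 by omega] using
        hc.adj_succ (l + (j - i - 1)) (by omega)
  adj_last := by
    simpa [show ¬ k - (j - i - 1) - 1 ≤ i by omega,
      show k - (j - i - 1) - 1 + (j - i - 1) = k - 1 by omega] using hc.adj_last
  injOn l hl l' hl' h := by
    simp only [Set.mem_Iio] at hl hl'
    have := hc.injOn (Set.mem_Iio.2 (by split_ifs <;> omega))
      (Set.mem_Iio.2 (by split_ifs <;> omega)) h
    split_ifs at this <;> omega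

theorem exists_not_adj_of_not_isClique (hc : G.IsCycleSeq c k)
    (hcl : ¬ G.IsClique (c '' Set.Iio k)) :
    ∃ i j, i + 2 ≤ j ∧ j < k ∧ (0 < i ∨ j + 1 < k) ∧ ¬ G.Adj (c i) (c j) := by
  simp only [IsClique, Set.Pairwise, Set.forall_mem_image, Set.mem_Iio, not_forall] at hcl
  obtain ⟨x, hx, y, hy, hne, hxy⟩ := hcl
  have hxy' : x ≠ y := fun h => hne (congrArg c h)
  wlog hlt : x < y generalizing x y
  · exact this y hy x hx hne.symm (fun h => hxy h.symm) hxy'.symm (by omega)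
  refine ⟨x, y, ?_, hy, ?_, hxy⟩
  · by_contra h
    exact hxy (by simpa [show y = x + 1 by omega] using hc.adj_succ x (by omega))
  · by_contra h
    exact hxy (by simpa [show x = 0 by omega, show y = k - 1 by omega] using hc.adj_last.symm)

theorem cycleGraph_isIndContained (hc : G.IsCycleSeq c k)
    (hchordless : ∀ i j, i + 2 ≤ j → j < k → (0 < i ∨ j + 1 < k) → ¬ G.Adj (c i) (c j)) :
    cycleGraph k ⊴ G := by
  refine ⟨⟨⟨fun p => c p, fun p q h => Fin.ext (hc.injOn p.isLt q.isLt h)⟩, fun {p q} => ?_⟩⟩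
  change G.Adj (c p) (c q) ↔ _
  have hp := p.isLt
  have hq := q.isLt
  rw [cycleGraph_adj_iff_val hc.two_le]
  constructor
  · intro h
    by_contra hne
    rcases lt_trichotomy (p : ℕ) q with hlt | heq | hlt
    · exact hchordless p q (by omega) hq (by omega) h
    · exact h.ne (congrArg c heq)
    · exact hchordless q p (by omega) hp (by omega) h.symm
  · rintro (h | h | ⟨h, h'⟩ | ⟨h, h'⟩)
    · rw [h]; exact hc.adj_succ p (by omega)
    · rw [h]; exact (hc.adj_succ q (by omega)).symm
    · rw [h, show (q : ℕ) = k - 1 by omega]; exact hc.adj_last.symm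
    · rw [h, show (p : ℕ) = k - 1 by omega]; exact hc.adj_last

theorem exists_hole_or_diamond (hc : G.IsCycleSeq c k) (hcl : ¬ G.IsClique (c '' Set.Iio k)) :
    (∃ m, 4 ≤ m ∧ cycleGraph m ⊴ G) ∨ diamondGraph ⊴ G := by
  induction k using Nat.strong_induction_on generalizing c with
  | _ k IH =>
  by_cases hchord : ∃ i j, i + 2 ≤ j ∧ j < k ∧ (0 < i ∨ j + 1 < k) ∧ G.Adj (c i) (c j)
  · obtain ⟨i, j, hij, hjk, hend, hadj⟩ := hchord
    set A := (fun l => c (i + l)) '' Set.Iio (j - i + 1)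
    set B := (fun l => c (if l ≤ i then l else l + (j - i - 1))) '' Set.Iio (k - (j - i - 1))
    by_cases hAcl : G.IsClique A
    · by_cases hBcl : G.IsClique B
      · have hci : c i ∈ A ∩ B :=
          ⟨⟨0, Set.mem_Iio.2 (by omega), by simp⟩, ⟨i, Set.mem_Iio.2 (by omega), by simp⟩⟩
        have hcj : c j ∈ A ∩ B :=
          ⟨⟨j - i, Set.mem_Iio.2 (by omega), by simp [show i + (j - i) = j by omega]⟩,
            ⟨i + 1, Set.mem_Iio.2 (by omega), by simp [show i + 1 + (j - i - 1) = j by omega]⟩⟩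
        refine .inr (diamondGraph_isIndContained_of_isClique_union hAcl hBcl hci hcj hadj.ne ?_)
        exact fun h => hcl (h.subset (image_Iio_subset_arc_union_shortcut c (by omega) hjk))
      · exact IH _ (by omega) (hc.shortcut (by omega) hjk hadj) hBcl
    · exact IH _ (by omega) (hc.arc (by omega) hjk hadj) hAcl
  · push Not at hchord
    obtain ⟨i, j, hij, hjk, hend, -⟩ := hc.exists_not_adj_of_not_isClique hcl
    exact .inl ⟨k, by omega, hc.cycleGraph_isIndContained hchord⟩

end IsCycleSeq

theorem Preconnected.exists_isPath_of_induce {s : Set V} (h : (G.induce s).Preconnected)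
    {u v : V} (hu : u ∈ s) (hv : v ∈ s) : ∃ p : G.Walk u v, p.IsPath ∧ ∀ z ∈ p.support, z ∈ s := by
  classical
  obtain ⟨w⟩ := h ⟨u, hu⟩ ⟨v, hv⟩
  refine ⟨w.bypass.map (Embedding.induce s).toHom,
    w.bypass_isPath.map (Embedding.induce (G := G) s).injective, ?_⟩
  intro z hz
  obtain ⟨z, -, rfl⟩ := List.mem_map.1 (Walk.support_map _ _ ▸ hz)
  exact z.2

def SeparatedIn (G : SimpleGraph V) (S : Set V) (x y : V) : Prop :=
  ∃ (hx : x ∈ S) (hy : y ∈ S), ¬ (G.induce S).Reachable ⟨x, hx⟩ ⟨y, hy⟩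

namespace SeparatedIn

variable {S : Set V} {x y : V}

theorem left_mem (h : G.SeparatedIn S x y) : x ∈ S := h.1

theorem right_mem (h : G.SeparatedIn S x y) : y ∈ S := h.2.1

theorem ne (h : G.SeparatedIn S x y) : x ≠ y := by
  obtain ⟨hx, hy, h⟩ := h
  rintro rfl
  exact h .rfl

theorem not_adj (h : G.SeparatedIn S x y) : ¬ G.Adj x y := by
  obtain ⟨hx, hy, h⟩ := h
  exact fun hxy => h (Adj.reachable (induce_adj.2 hxy))

theorem left_or_right {z : V} (h : G.SeparatedIn S x y) (hz : z ∈ S) :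
    G.SeparatedIn S x z ∨ G.SeparatedIn S z y := by
  obtain ⟨hx, hy, h⟩ := h
  by_cases hxz : (G.induce S).Reachable ⟨x, hx⟩ ⟨z, hz⟩
  · exact .inr ⟨hz, hy, fun hzy => h (hxz.trans hzy)⟩
  · exact .inl ⟨hx, hz, hxz⟩

theorem exists_isPath_inner_notMem (h : G.SeparatedIn S x y) (p : G.Walk x y) (hp : p.IsPath) :
    ∃ (u v : V) (q : G.Walk u v), G.SeparatedIn S u v ∧ q.IsPath ∧ q.support ⊆ p.support ∧
      ∀ z ∈ q.support, z ∈ S → z = u ∨ z = v := by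
  classical
  induction hn : p.length using Nat.strong_induction_on generalizing x y with
  | _ n IH =>
  by_cases hinner : ∀ z ∈ p.support, z ∈ S → z = x ∨ z = y
  · exact ⟨x, y, p, h, hp, List.Subset.refl _, hinner⟩
  push Not at hinner
  obtain ⟨z, hzp, hzS, hzx, hzy⟩ := hinner
  rcases h.left_or_right hzS with hxz | hzy'
  · obtain ⟨u, v, q, huv, hq, hqp, hqS⟩ := IH _ (hn ▸ Walk.length_takeUntil_lt_length hzp hzy)
      hxz (p.takeUntil z hzp) (hp.takeUntil hzp) rfl
    exact ⟨u, v, q, huv, hq, List.Subset.trans hqp (p.support_takeUntil_subset_support hzp), hqS⟩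
  · obtain ⟨u, v, q, huv, hq, hqp, hqS⟩ := IH _ (hn ▸ Walk.length_dropUntil_lt_length hzp hzx)
      hzy' (p.dropUntil z hzp) (hp.dropUntil hzp) rfl
    exact ⟨u, v, q, huv, hq, List.Subset.trans hqp (p.support_dropUntil_subset_support hzp), hqS⟩

end SeparatedIn

theorem exists_separatedIn_of_not_connected {S : Set V} (hS : S.Nonempty)
    (h : ¬ (G.induce S).Connected) : ∃ x y, G.SeparatedIn S x y := by
  have : Nonempty S := hS.to_subtype
  rw [connected_iff] at h
  obtain ⟨x, y, hxy⟩ : ∃ x y : S, ¬ (G.induce S).Reachable x y := by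
    by_contra! hr
    exact h ⟨hr, ‹_›⟩
  exact ⟨x, y, x.2, y.2, hxy⟩

theorem Walk.IsPath.isCycleSeq_append_reverse {u v : V} {p q : G.Walk u v} (hp : p.IsPath)
    (hq : q.IsPath) (huv : u ≠ v) (hpq : ∀ z ∈ p.support, z ∈ q.support → z = u ∨ z = v) :
    G.IsCycleSeq (p.append q.reverse).getVert (p.length + q.length) where
  adj_succ i hi := (p.append q.reverse).adj_getVert_succ (by simp; omega)
  adj_last := by
    rw [Walk.getVert_zero]
    have hp0 : 0 < p.length := Walk.not_nil_iff_lt_length.1 (Walk.not_nil_of_ne huv)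
    have := (p.append q.reverse).adj_getVert_succ (i := p.length + q.length - 1) (by simp; omega)
    rwa [show p.length + q.length - 1 + 1 = (p.append q.reverse).length by simp; omega,
      Walk.getVert_length] at this
  injOn := by
    have hval : ∀ l, (p.append q.reverse).getVert l =
        if l ≤ p.length then p.getVert l else q.getVert (p.length + q.length - l) := by
      intro l
      rw [Walk.getVert_append', Walk.getVert_reverse]
      split_ifs
      · rfl
      · congr 1
        omega
    have hmixed : ∀ l m, 0 < m → m < q.length → p.getVert l ≠ q.getVert m := by
      intro l m hm0 hmq h
      rcases hpq _ (p.getVert_mem_support l) (h ▸ q.getVert_mem_support m) with h' | h'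
      · rw [h, hq.getVert_eq_start_iff hmq.le] at h'
        omega
      · rw [h, hq.getVert_eq_end_iff hmq.le] at h'
        omega
    intro l hl l' hl' h
    simp only [Set.mem_Iio] at hl hl'
    rw [hval, hval] at h
    split_ifs at h with h1 h2 h2
    · exact hp.getVert_injOn h1 h2 h
    · exact absurd h (hmixed _ _ (by omega) (by omega))
    · exact absurd h.symm (hmixed _ _ (by omega) (by omega))
    · have := hq.getVert_injOn (show _ ≤ q.length by omega) (show _ ≤ q.length by omega) h
      omega

theorem exists_hole_or_diamond_of_isPath {u v : V} {p q : G.Walk u v} (hp : p.IsPath)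
    (hq : q.IsPath) (huv : u ≠ v) (hnadj : ¬ G.Adj u v)
    (hpq : ∀ z ∈ p.support, z ∈ q.support → z = u ∨ z = v) :
    (∃ m, 4 ≤ m ∧ cycleGraph m ⊴ G) ∨ diamondGraph ⊴ G := by
  refine (hp.isCycleSeq_append_reverse hq huv hpq).exists_hole_or_diamond fun h => hnadj ?_
  have hq0 : 0 < q.length := Walk.not_nil_iff_lt_length.1 (Walk.not_nil_of_ne huv)
  refine h ⟨0, Set.mem_Iio.2 (by omega), Walk.getVert_zero _⟩
    ⟨p.length, Set.mem_Iio.2 (by omega), ?_⟩ huv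
  rw [Walk.getVert_append', if_pos le_rfl, Walk.getVert_length]

end SimpleGraph

theorem stmt0_general {V : Type*} (G : SimpleGraph V) (J J' : Set V)
    (hJ : (G.induce J).Connected) (hJ' : (G.induce J').Connected)
    (hne : (J ∩ J').Nonempty) (hdisc : ¬ (G.induce (J ∩ J')).Connected) :
    ∃ I : Set V,
      (∃ k : ℕ, 4 ≤ k ∧ Nonempty (G.induce I ≃g cycleGraph k)) ∨
      Nonempty (G.induce I ≃g diamondGraph) := by
  obtain ⟨x, y, hxy⟩ := exists_separatedIn_of_not_connected hne hdisc
  obtain ⟨p, hp, hpJ⟩ := hJ.preconnected.exists_isPath_of_induce hxy.left_mem.1 hxy.right_mem.1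
  obtain ⟨u, v, q, huv, hq, hqp, hqJ'⟩ := hxy.exists_isPath_inner_notMem p hp
  obtain ⟨r, hr, hrJ'⟩ := hJ'.preconnected.exists_isPath_of_induce huv.left_mem.2 huv.right_mem.2
  rcases exists_hole_or_diamond_of_isPath hq hr huv.ne huv.not_adj
    (fun z hzq hzr => hqJ' z hzq ⟨hpJ z (hqp hzq), hrJ' z hzr⟩) with ⟨k, hk, hC⟩ | hD
  · obtain ⟨I, ⟨e⟩⟩ := isIndContained_iff_exists_iso_induce.1 hC
    exact ⟨I, .inl ⟨k, hk, ⟨e.symm⟩⟩⟩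
  · obtain ⟨I, ⟨e⟩⟩ := isIndContained_iff_exists_iso_induce.1 hD
    exact ⟨I, .inr ⟨e.symm⟩⟩

theorem stmt0 {V : Type*} [Fintype V] (G : SimpleGraph V) (J J' : Set V)
    (hJ : (G.induce J).Connected) (hJ' : (G.induce J').Connected)
    (hne : (J ∩ J').Nonempty) (hdisc : ¬ (G.induce (J ∩ J')).Connected) :
    ∃ I : Set V,
      (∃ k : ℕ, 4 ≤ k ∧ Nonempty (G.induce I ≃g cycleGraph k)) ∨
      Nonempty (G.induce I ≃g diamondGraph) :=
  stmt0_general G J J' hJ hJ' hne hdisc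
end

section
/- Let G be a finite simple graph on vertex set {1, …, n}, and for each connected vertex subset I (i.e., I nonempty with G|_I connected) let e_I = Σ_{i∈I} e_i ∈ ℤ^n, and for each i let e_{ī} = −e_i, where e_1, …, e_n is the standard basis. Suppose N is a collection of such labels that is pairwise 'compatible' in the following sense: for I, J connected subsets, they are compatible iff I ⊆ J or J ⊆ I or G|_{I∪J} is disconnected; a connected subset I and a barred label ī are compatible iff i ∉ I; and any two barred labels are compatible. If N is pairwise compatible and |N| = n, then the vectors {e_I : I ∈ N} form a ℤ-basis of ℤ^n. -/
open SimpleGraph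

noncomputable def cubeVec (n : ℕ) : Set (Fin n) ⊕ Fin n → (Fin n → ℤ) :=
  Sum.elim (fun I => I.indicator 1) (fun i => -(({i} : Set (Fin n)).indicator 1))

def cubeCompat {n : ℕ} (G : SimpleGraph (Fin n)) :
    (Set (Fin n) ⊕ Fin n) → (Set (Fin n) ⊕ Fin n) → Prop
  | .inl I, .inl J => I ⊆ J ∨ J ⊆ I ∨ ¬ (G.induce (I ∪ J)).Connected
  | .inl I, .inr i => i ∉ I
  | .inr i, .inl I => i ∉ I
  | .inr _, .inr _ => True

/-!
The unbarred labels of `N` form a tubing `L` of `G`. Every tube `I ∈ L` has a root: a vertex of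
`I` lying in no smaller tube, since the maximal proper subtubes of `I` are pairwise disjoint and
non-adjacent and so cannot cover the connected set `I`. Distinct tubes have distinct roots, and
roots avoid the barred vertices `B`; as `|L| + |B| = n`, the roots are exactly the vertices
outside `B`. Then `e_{root I} = e_I - ∑ e_{root J}` over the tubes `J ⊊ I`, so induction on `I`
puts every standard basis vector in the span of the `n` vectors, which are therefore a basis of
`ℤⁿ` (a spanning family of `n` vectors in `ℤⁿ` is linearly independent).
-/

theorem Set.ncard_preimage_inl_add_ncard_preimage_inr {α β : Type*} [Finite α] [Finite β]
    (s : Set (α ⊕ β)) : (Sum.inl ⁻¹' s).ncard + (Sum.inr ⁻¹' s).ncard = s.ncard := by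
  conv_rhs => rw [← Set.image_preimage_inl_union_image_preimage_inr s]
  rw [Set.ncard_union_eq Set.disjoint_image_inl_image_inr,
    Set.ncard_image_of_injective _ Sum.inl_injective,
    Set.ncard_image_of_injective _ Sum.inr_injective]

theorem Submodule.mem_of_forall_single_one_mem {ι R : Type*} [Fintype ι] [DecidableEq ι]
    [Semiring R] {W : Submodule R (ι → R)} {f : ι → R}
    (h : ∀ i, f i ≠ 0 → Pi.single i 1 ∈ W) : f ∈ W := by
  rw [← Finset.univ_sum_single f]
  refine Submodule.sum_mem _ fun i _ => ?_
  by_cases hi : f i = 0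
  · simp [hi]
  · simpa [← Pi.single_smul] using W.smul_mem (f i) (h i hi)

namespace SimpleGraph

variable {V : Type*} {G : SimpleGraph V}

theorem ne_and_not_adj_of_not_connected_induce_union {s t : Set V}
    (hs : (G.induce s).Preconnected) (ht : (G.induce t).Preconnected)
    (hst : ¬ (G.induce (s ∪ t)).Connected) {a b : V} (ha : a ∈ s) (hb : b ∈ t) :
    a ≠ b ∧ ¬ G.Adj a b :=
  ⟨fun hab => hst (induce_union_connected hs ht ⟨a, ha, hab ▸ hb⟩),
    fun hadj => hst (connected_induce_union hs ht ha hb hadj)⟩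

theorem exists_adj_of_induce_preconnected {s S : Set V} (hs : (G.induce s).Preconnected)
    {x y : V} (hxs : x ∈ s) (hxS : x ∈ S) (hys : y ∈ s) (hyS : y ∉ S) :
    ∃ a ∈ s, a ∈ S ∧ ∃ b ∈ s, b ∉ S ∧ G.Adj a b := by
  obtain ⟨p⟩ := hs ⟨x, hxs⟩ ⟨y, hys⟩
  obtain ⟨d, -, haS, hbS⟩ := p.exists_boundary_dart {v : s | v.1 ∈ S} hxS hyS
  exact ⟨d.fst, d.fst.2, haS, d.snd, d.snd.2, hbS, d.adj⟩

structure IsTubing (G : SimpleGraph V) (L : Set (Set V)) : Prop where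
  connected : ∀ I ∈ L, (G.induce I).Connected
  compat : ∀ I ∈ L, ∀ J ∈ L, I ⊆ J ∨ J ⊆ I ∨ ¬ (G.induce (I ∪ J)).Connected

namespace IsTubing

variable {L : Set (Set V)}

theorem nonempty (hL : G.IsTubing L) {I : Set V} (hI : I ∈ L) : I.Nonempty :=
  Set.nonempty_coe_sort.1 (hL.connected I hI).nonempty

theorem ne_and_not_adj_of_not_subset (hL : G.IsTubing L) {I J : Set V} (hI : I ∈ L) (hJ : J ∈ L)
    (hIJ : ¬ I ⊆ J) (hJI : ¬ J ⊆ I) {a b : V} (ha : a ∈ I) (hb : b ∈ J) :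
    a ≠ b ∧ ¬ G.Adj a b := by
  have hnc : ¬ (G.induce (I ∪ J)).Connected := by
    simpa [hIJ, hJI] using hL.compat I hI J hJ
  exact ne_and_not_adj_of_not_connected_induce_union (hL.connected I hI).preconnected
    (hL.connected J hJ).preconnected hnc ha hb

theorem subset_or_subset_of_mem_of_mem (hL : G.IsTubing L) {I J : Set V} (hI : I ∈ L)
    (hJ : J ∈ L) {x : V} (hxI : x ∈ I) (hxJ : x ∈ J) : I ⊆ J ∨ J ⊆ I := by
  by_contra! h
  exact (hL.ne_and_not_adj_of_not_subset hI hJ h.1 h.2 hxI hxJ).1 rfl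

theorem exists_mem_forall_ssubset_notMem [Finite V] (hL : G.IsTubing L) {I : Set V}
    (hI : I ∈ L) : ∃ x ∈ I, ∀ J ∈ L, J ⊂ I → x ∉ J := by
  by_contra! hcover
  let M : Set (Set V) := {J | J ∈ L ∧ J ⊂ I}
  have hmax : ∀ x ∈ I, ∃ K, Maximal (· ∈ M) K ∧ x ∈ K := by
    intro x hx
    obtain ⟨J, hJL, hJI, hxJ⟩ := hcover x hx
    obtain ⟨K, hJK, hK⟩ := M.toFinite.exists_le_maximal (show J ∈ M from ⟨hJL, hJI⟩)
    exact ⟨K, hK, hJK hxJ⟩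
  -- Distinct maximal proper subtubes are incomparable, hence not joined by an edge,
  -- yet they cover the connected set `I`.
  obtain ⟨x, hx⟩ := hL.nonempty hI
  obtain ⟨K, hK, hxK⟩ := hmax x hx
  obtain ⟨y, hyI, hyK⟩ := Set.exists_of_ssubset hK.prop.2
  obtain ⟨a, -, haK, b, hbI, hbK, hab⟩ :=
    exists_adj_of_induce_preconnected (hL.connected I hI).preconnected hx hxK hyI hyK
  obtain ⟨K', hK', hbK'⟩ := hmax b hbI
  have hKK' : ¬ K ⊆ K' := fun h => hbK (hK.eq_of_subset hK'.prop h ▸ hbK')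
  have hK'K : ¬ K' ⊆ K := fun h => hbK (h hbK')
  exact (hL.ne_and_not_adj_of_not_subset hK.prop.1 hK'.prop.1 hKK' hK'K haK hbK').2 hab

variable [Finite V]

noncomputable def root (hL : G.IsTubing L) (I : L) : V :=
  (hL.exists_mem_forall_ssubset_notMem I.2).choose

theorem root_mem (hL : G.IsTubing L) (I : L) : hL.root I ∈ (I : Set V) :=
  (hL.exists_mem_forall_ssubset_notMem I.2).choose_spec.1

theorem root_notMem (hL : G.IsTubing L) {I : L} {J : Set V} (hJ : J ∈ L) (hJI : J ⊂ I) :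
    hL.root I ∉ J :=
  (hL.exists_mem_forall_ssubset_notMem I.2).choose_spec.2 J hJ hJI

theorem subset_of_root_mem (hL : G.IsTubing L) {I J : L} (h : hL.root J ∈ (I : Set V)) :
    (J : Set V) ⊆ I := by
  rcases hL.subset_or_subset_of_mem_of_mem J.2 I.2 (hL.root_mem J) h with hJI | hIJ
  · exact hJI
  · rcases hIJ.eq_or_ssubset with hIJ | hIJ
    · exact hIJ.ge
    · exact absurd h (hL.root_notMem I.2 hIJ)

theorem root_injective (hL : G.IsTubing L) : Function.Injective hL.root := fun I J h =>
  Subtype.ext <| (hL.subset_of_root_mem (h ▸ hL.root_mem J)).antisymm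
    (hL.subset_of_root_mem (h ▸ hL.root_mem I))

theorem range_root_eq_compl (hL : G.IsTubing L) {B : Set V} (hB : ∀ I ∈ L, Disjoint I B)
    (hcard : L.ncard + B.ncard = Nat.card V) : Set.range hL.root = Bᶜ := by
  refine Set.eq_of_subset_of_ncard_le ?_ ?_
  · rintro _ ⟨I, rfl⟩
    exact Set.disjoint_left.1 (hB I I.2) (hL.root_mem I)
  · rw [← Nat.card_coe_set_eq (Set.range _), Nat.card_range_of_injective hL.root_injective,
      Nat.card_coe_set_eq]
    have := Set.ncard_add_ncard_compl B
    omega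

theorem single_root_mem [DecidableEq V] {R : Type*} [Ring R] (hL : G.IsTubing L)
    {W : Submodule R (V → R)} (hW : ∀ I ∈ L, I.indicator 1 ∈ W)
    (hroot : ∀ I ∈ L, I ⊆ Set.range hL.root) (I : L) :
    Pi.single (hL.root I) 1 ∈ W := by
  have := Fintype.ofFinite V
  induction I using WellFoundedLT.induction with
  | _ I ih =>
    have hrest : I.1.indicator 1 - Pi.single (hL.root I) 1 ∈ W := by
      refine Submodule.mem_of_forall_single_one_mem fun x hx => ?_
      have hxI : x ∈ (I : Set V) := by
        by_contra hxI
        have hxr : x ≠ hL.root I := fun h => hxI (h ▸ hL.root_mem I)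
        simp [hxI, hxr] at hx
      have hxr : x ≠ hL.root I := by
        rintro rfl
        simp [hL.root_mem I] at hx
      obtain ⟨J, rfl⟩ := hroot I I.2 hxI
      exact ih J (lt_of_le_of_ne (hL.subset_of_root_mem hxI) (ne_of_apply_ne hL.root hxr))
    simpa using sub_mem (hW I I.2) hrest

end IsTubing

end SimpleGraph

theorem cubeVec_inr {n : ℕ} (i : Fin n) : cubeVec n (.inr i) = -Pi.single i 1 := by
  simp [cubeVec, Set.indicator_singleton]

theorem top_le_span_cubeVec {n : ℕ} (G : SimpleGraph (Fin n)) (N : Set (Set (Fin n) ⊕ Fin n))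
    (hconn : ∀ I : Set (Fin n), Sum.inl I ∈ N → (G.induce I).Connected)
    (hcompat : ∀ l ∈ N, ∀ l' ∈ N, cubeCompat G l l') (hcard : Nat.card N = n) :
    ⊤ ≤ Submodule.span ℤ (Set.range fun l : N => cubeVec n l) := by
  set W := Submodule.span ℤ (Set.range fun l : N => cubeVec n l)
  set L : Set (Set (Fin n)) := Sum.inl ⁻¹' N
  set B : Set (Fin n) := Sum.inr ⁻¹' N
  have hL : G.IsTubing L := ⟨hconn, fun I hI J hJ => hcompat _ hI _ hJ⟩
  have hB : ∀ I ∈ L, Disjoint I B := fun I hI =>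
    Set.disjoint_right.2 fun i hi => hcompat _ hi _ hI
  have hLB : L.ncard + B.ncard = Nat.card (Fin n) := by
    rw [Set.ncard_preimage_inl_add_ncard_preimage_inr, ← Nat.card_coe_set_eq, hcard, Nat.card_fin]
  have hroot : Set.range hL.root = Bᶜ := hL.range_root_eq_compl hB hLB
  have hsingle (i : Fin n) : Pi.single i 1 ∈ W := by
    by_cases hi : i ∈ B
    · have := W.neg_mem (Submodule.subset_span (Set.mem_range_self (⟨.inr i, hi⟩ : N)))
      simpa [cubeVec_inr] using this
    · obtain ⟨I, rfl⟩ := hroot.ge hi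
      exact hL.single_root_mem (W := W)
        (fun J hJ => Submodule.subset_span (Set.mem_range_self (⟨.inl J, hJ⟩ : N)))
        (fun J hJ => hroot ▸ (hB J hJ).subset_compl_right) I
  exact fun f _ => Submodule.mem_of_forall_single_one_mem fun i _ => hsingle i

theorem stmt9_general {n : ℕ} (G : SimpleGraph (Fin n)) (N : Set (Set (Fin n) ⊕ Fin n))
    (hconn : ∀ I : Set (Fin n), Sum.inl I ∈ N → I.Nonempty ∧ (G.induce I).Connected)
    (hcompat : ∀ l ∈ N, ∀ l' ∈ N, cubeCompat G l l')
    (hcard : Nat.card N = n) :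
    ∃ b : Module.Basis N ℤ (Fin n → ℤ), ∀ l : N, b l = cubeVec n l.val := by
  have := Fintype.ofFinite N
  have hcardN : Fintype.card N = Module.finrank ℤ (Fin n → ℤ) := by
    rw [Module.finrank_fin_fun, ← Nat.card_eq_fintype_card, hcard]
  have hspan := top_le_span_cubeVec G N (fun I hI => (hconn I hI).2) hcompat hcard
  exact ⟨basisOfTopLeSpanOfCardEqFinrank _ hspan hcardN,
    fun l => by rw [coe_basisOfTopLeSpanOfCardEqFinrank]⟩

theorem stmt9 {n : ℕ} (G : SimpleGraph (Fin n)) (N : Set (Set (Fin n) ⊕ Fin n))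
    (hconn : ∀ I : Set (Fin n), Sum.inl I ∈ N → I.Nonempty ∧ (G.induce I).Connected)
    (hcompat : ∀ l ∈ N, ∀ l' ∈ N, cubeCompat G l l')
    (hfin : N.Finite) (hcard : Nat.card N = n) :
    ∃ b : Module.Basis N ℤ (Fin n → ℤ), ∀ l : N, b l = cubeVec n l.val :=
  stmt9_general G N hconn hcompat hcard
end

section
/- Let G be a finite simple graph with no induced subgraph isomorphic to a cycle with ≥ 4 vertices, no induced diamond, and no induced claw. Then for any two vertex subsets J, J' with G|_J, G|_{J'} and G|_{J∪J'} connected and J ∩ J' ≠ ∅, the induced subgraph G|_{J ∩ J'} is connected. -/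
open SimpleGraph

def clawGraph : SimpleGraph (Fin 4) := SimpleGraph.fromEdgeSet {s(0,1), s(0,2), s(0,3)}

/-!
Without induced long cycles and diamonds, the vertices of every cycle form a clique: a cycle of
length at least four has a chord, which cuts it into two shorter cycles, cliques by induction,
sharing the edge of the chord; a non-adjacent pair across them would span a diamond with that edge.

If `G|_(J ∩ J')` were disconnected, take `u`, `v` in different components joined by a shortest
possible walk in `G|_J`. Its interior avoids `J'`, so with a path from `u` to `v` in `G|_J'` it
closes up to a cycle. Hence `u` and `v` are adjacent, a contradiction.
-/

section

open Set

variable {V : Type*} {G : SimpleGraph V}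

def IsWalkIn (G : SimpleGraph V) (S : Set V) (c : ℕ → V) (n : ℕ) : Prop :=
  (∀ t ≤ n, c t ∈ S) ∧ ∀ t < n, G.Adj (c t) (c (t + 1))

namespace IsWalkIn

variable {S : Set V} {c : ℕ → V} {n : ℕ}

lemma mono {T : Set V} (h : IsWalkIn G S c n) (hST : S ⊆ T) : IsWalkIn G T c n :=
  ⟨fun t ht => hST (h.1 t ht), h.2⟩

lemma take {i : ℕ} (h : IsWalkIn G S c n) (hi : i ≤ n) : IsWalkIn G S c i :=
  ⟨fun t ht => h.1 t (by omega), fun t ht => h.2 t (by omega)⟩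

lemma drop {i : ℕ} (h : IsWalkIn G S c n) (hi : i ≤ n) :
    IsWalkIn G S (fun t => c (i + t)) (n - i) :=
  ⟨fun t ht => h.1 _ (by omega),
    fun t ht => by simpa only [← add_assoc] using h.2 (i + t) (by omega)⟩

lemma shortcut {i d : ℕ} (h : IsWalkIn G S c n) (hid : i + 1 + d ≤ n)
    (hadj : G.Adj (c i) (c (i + 1 + d))) :
    IsWalkIn G S (fun t => c (if t ≤ i then t else t + d)) (n - d) := by
  refine ⟨fun t ht => h.1 _ (by split_ifs <;> omega), fun t ht => ?_⟩
  show G.Adj (c (if t ≤ i then t else t + d)) (c (if t + 1 ≤ i then t + 1 else t + 1 + d))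
  rcases lt_trichotomy t i with hti | rfl | hti
  · rw [if_pos hti.le, if_pos (by omega)]
    exact h.2 t (by omega)
  · rwa [if_pos le_rfl, if_neg (by omega)]
  · rw [if_neg (by omega), if_neg (by omega), show t + 1 + d = t + d + 1 by omega]
    exact h.2 (t + d) (by omega)

lemma append_reverse {p q : ℕ → V} {k m : ℕ} (hp : IsWalkIn G S p k) (hq : IsWalkIn G S q m)
    (hend : p k = q m) (hm : 1 ≤ m) :
    IsWalkIn G S (fun t => if t ≤ k then p t else q (k + m - t)) (k + m - 1) := by
  refine ⟨fun t ht => ?_, fun t ht => ?_⟩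
  · show (if t ≤ k then p t else q (k + m - t)) ∈ S
    split_ifs with htk
    · exact hp.1 t htk
    · exact hq.1 _ (by omega)
  rcases lt_trichotomy t k with htk | rfl | htk
  · simp only [if_pos htk.le, if_pos (show t + 1 ≤ k by omega)]
    exact hp.2 t htk
  · simp only [if_pos le_rfl, if_neg (show ¬ t + 1 ≤ t by omega), hend,
      show t + m - (t + 1) = m - 1 by omega]
    simpa [show m - 1 + 1 = m by omega] using (hq.2 (m - 1) (by omega)).symm
  · simp only [if_neg (show ¬ t ≤ k by omega), if_neg (show ¬ t + 1 ≤ k by omega)]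
    simpa [show k + m - (t + 1) + 1 = k + m - t by omega]
      using (hq.2 (k + m - (t + 1)) (by omega)).symm

lemma exists_of_reachable {x y : S} (h : (G.induce S).Reachable x y) :
    ∃ n c, IsWalkIn G S c n ∧ c 0 = x ∧ c n = y := by
  obtain ⟨w⟩ := h
  exact ⟨w.length, fun t => w.getVert t,
    ⟨fun t _ => (w.getVert t).2, fun t ht => w.adj_getVert_succ ht⟩, by simp, by simp⟩

lemma injOn_of_minimal (h : IsWalkIn G S c n)
    (hmin : ∀ n' < n, ∀ c', IsWalkIn G S c' n' → c' 0 = c 0 → c' n' ≠ c n) :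
    InjOn c (Iic n) := by
  have key : ∀ i j, i < j → j ≤ n → c i ≠ c j := by
    intro i j hij hj heq
    rcases hj.lt_or_eq with hj | rfl
    · have hjump : G.Adj (c i) (c (i + 1 + (j - i))) := by
        rw [heq, show i + 1 + (j - i) = j + 1 by omega]
        exact h.2 j hj
      refine hmin _ (by omega) _ (h.shortcut (by omega) hjump) (by simp) ?_
      simp only [if_neg (show ¬ n - (j - i) ≤ i by omega), show n - (j - i) + (j - i) = n by omega]
    · exact hmin i hij c (h.take hij.le) rfl heq
  intro i hi j hj heq
  by_contra hne
  rcases Nat.lt_or_gt_of_ne hne with hlt | hlt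
  · exact key i j hlt hj heq
  · exact key j i hlt hi heq.symm

lemma exists_injOn_of_reachable {x y : S} (h : (G.induce S).Reachable x y) :
    ∃ n c, IsWalkIn G S c n ∧ InjOn c (Iic n) ∧ c 0 = x ∧ c n = y := by
  classical
  have hex := exists_of_reachable h
  obtain ⟨c, hc, h0, hn⟩ := Nat.find_spec hex
  exact ⟨_, c, hc, hc.injOn_of_minimal fun n' hn' c' hc' h0' hn'' =>
    Nat.find_min hex hn' ⟨c', hc', h0'.trans h0, hn''.trans hn⟩, h0, hn⟩

end IsWalkIn

lemma not_isIndContained_of_forall_not_iso {W : Type*} {H : SimpleGraph W}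
    (h : ∀ I : Set V, ¬ Nonempty (G.induce I ≃g H)) : ¬ H ⊴ G := fun hHG => by
  obtain ⟨I, ⟨e⟩⟩ := isIndContained_iff_exists_iso_induce.mp hHG
  exact h I ⟨e.symm⟩

lemma adj_of_not_diamond (hdia : ¬ diamondGraph ⊴ G) {a b x y : V} (hab : G.Adj a b)
    (hax : G.Adj a x) (hay : G.Adj a y) (hbx : G.Adj b x) (hby : G.Adj b y) (hxy : x ≠ y) :
    G.Adj x y := by
  by_contra hxy'
  have := hab.ne; have := hax.ne; have := hay.ne; have := hbx.ne; have := hby.ne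
  refine hdia ⟨⟨⟨![a, b, x, y], fun i j hij => ?_⟩, fun {i j} => ?_⟩⟩
  · fin_cases i <;> fin_cases j <;> simp_all [eq_comm]
  · change G.Adj (![a, b, x, y] i) (![a, b, x, y] j) ↔ diamondGraph.Adj i j
    fin_cases i <;> fin_cases j <;> simp_all [diamondGraph, adj_comm]

lemma isClique_union_of_not_diamond (hdia : ¬ diamondGraph ⊴ G) {A B : Set V}
    (hA : G.IsClique A) (hB : G.IsClique B) {a b : V} (ha : a ∈ A ∩ B) (hb : b ∈ A ∩ B)
    (hab : G.Adj a b) : G.IsClique (A ∪ B) := by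
  have hcross : ∀ x ∈ A, ∀ y ∈ B, x ≠ y → G.Adj x y := by
    intro x hx y hy hxy
    by_cases hxB : x ∈ B
    · exact hB hxB hy hxy
    by_cases hyA : y ∈ A
    · exact hA hx hyA hxy
    exact adj_of_not_diamond hdia hab (hA ha.1 hx (ne_of_mem_of_not_mem ha.2 hxB))
      (hB ha.2 hy (ne_of_mem_of_not_mem ha.1 hyA)) (hA hb.1 hx (ne_of_mem_of_not_mem hb.2 hxB))
      (hB hb.2 hy (ne_of_mem_of_not_mem hb.1 hyA)) hxy
  rintro x (hx | hx) y (hy | hy) hxy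
  · exact hA hx hy hxy
  · exact hcross x hx y hy hxy
  · exact (hcross y hy x hx hxy.symm).symm
  · exact hB hx hy hxy

lemma exists_chord_of_cycle (hcyc : ∀ k, 4 ≤ k → ¬ cycleGraph k ⊴ G) {c : ℕ → V} {n : ℕ}
    (hn : 3 ≤ n) (hc : IsWalkIn G univ c n) (hinj : InjOn c (Iic n))
    (hclose : G.Adj (c n) (c 0)) :
    ∃ a b, a + 2 ≤ b ∧ b ≤ n ∧ b - a < n ∧ G.Adj (c a) (c b) := by
  by_contra! hno
  have hadj : ∀ i ≤ n, ∀ j ≤ n, G.Adj (c i) (c j) ↔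
      j = i + 1 ∨ i = j + 1 ∨ (i = 0 ∧ j = n) ∨ (j = 0 ∧ i = n) := by
    intro i hi j hj
    refine ⟨fun h => ?_, ?_⟩
    · by_contra! h'
      rcases lt_trichotomy i j with hij | rfl | hij
      · exact hno i j (by omega) hj (by omega) h
      · exact h.ne rfl
      · exact hno j i (by omega) hi (by omega) h.symm
    · rintro (rfl | rfl | ⟨rfl, rfl⟩ | ⟨rfl, rfl⟩)
      · exact hc.2 i (by omega)
      · exact (hc.2 j (by omega)).symm
      · exact hclose.symm
      · exact hclose
  have hlt : ∀ s : Fin (n + 1), (s : ℕ) ∈ Iic n := fun s => Nat.lt_succ_iff.mp s.isLt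
  refine hcyc (n + 1) (by omega)
    ⟨⟨⟨fun s => c s, fun s t hst => Fin.ext (hinj (hlt s) (hlt t) hst)⟩, fun {s t} => ?_⟩⟩
  change G.Adj (c s) (c t) ↔ _
  rw [hadj s (hlt s) t (hlt t), cycleGraph_adj']
  rcases lt_trichotomy s t with hst | rfl | hst
  · rw [Fin.coe_sub_iff_lt.mpr hst, Fin.coe_sub_iff_le.mpr hst.le]
    omega
  · simp only [sub_self, Fin.val_zero]
    omega
  · rw [Fin.coe_sub_iff_le.mpr hst.le, Fin.coe_sub_iff_lt.mpr hst]
    omega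

lemma isClique_image_of_cycle (hcyc : ∀ k, 4 ≤ k → ¬ cycleGraph k ⊴ G)
    (hdia : ¬ diamondGraph ⊴ G) (n : ℕ) (c : ℕ → V) (hn : 2 ≤ n) (hc : IsWalkIn G univ c n)
    (hinj : InjOn c (Iic n)) (hclose : G.Adj (c n) (c 0)) : G.IsClique (c '' Iic n) := by
  induction n using Nat.strong_induction_on generalizing c with
  | _ n ih =>
  rcases (show n = 2 ∨ 3 ≤ n by omega) with rfl | hn3
  · rintro _ ⟨i, hi, rfl⟩ _ ⟨j, hj, rfl⟩ hij
    simp only [mem_Iic] at hi hj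
    interval_cases i <;> interval_cases j
    all_goals first
      | exact absurd rfl hij
      | exact hc.2 _ (by omega) | exact (hc.2 _ (by omega)).symm | exact hclose | exact hclose.symm
  obtain ⟨a, b, hab, hbn, hba, hchord⟩ := exists_chord_of_cycle hcyc hn3 hc hinj hclose
  -- the chord cuts the cycle into `c a, …, c b` and `c 0, …, c a, c b, …, c n`
  have hinner := ih (b - a) hba (fun t => c (a + t)) (by omega)
    ((hc.drop (by omega)).take (by omega))
    (hinj.comp (fun s _ t _ h => by omega) (fun t ht => by simp only [mem_Iic] at ht ⊢; omega))
    (by simpa [show a + (b - a) = b by omega] using hchord.symm)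
  have houter := ih (n - (b - a - 1)) (by omega) _ (by omega)
    (hc.shortcut (i := a) (d := b - a - 1) (by omega)
      (by rwa [show a + 1 + (b - a - 1) = b by omega]))
    (hinj.comp (fun s _ t _ h => by split_ifs at h <;> omega)
      (fun t ht => by simp only [mem_Iic] at ht ⊢; split_ifs <;> omega))
    (by rwa [if_neg (show ¬ n - (b - a - 1) ≤ a by omega), if_pos (Nat.zero_le a),
      show n - (b - a - 1) + (b - a - 1) = n by omega])
  refine (isClique_union_of_not_diamond hdia hinner houter ?_ ?_ hchord).subset ?_
  · exact ⟨⟨0, by simp⟩, ⟨a, by simp only [mem_Iic]; omega, by simp⟩⟩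
  · exact ⟨⟨b - a, by simp [show a + (b - a) = b by omega]⟩,
      ⟨a + 1, by simp only [mem_Iic]; omega, by simp [show a + 1 + (b - a - 1) = b by omega]⟩⟩
  · rintro _ ⟨i, hi, rfl⟩
    simp only [mem_Iic] at hi
    by_cases hiab : a ≤ i ∧ i ≤ b
    · exact Or.inl ⟨i - a, by simp only [mem_Iic]; omega, by simp [show a + (i - a) = i by omega]⟩
    · refine Or.inr ⟨if i ≤ a then i else i - (b - a - 1),
        by simp only [mem_Iic]; split_ifs <;> omega, ?_⟩
      simp only
      congr 1
      split_ifs <;> omega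

lemma adj_of_internally_disjoint_walks (hcyc : ∀ k, 4 ≤ k → ¬ cycleGraph k ⊴ G)
    (hdia : ¬ diamondGraph ⊴ G) {p q : ℕ → V} {k m : ℕ} (hk : 1 ≤ k) (hm : 2 ≤ m)
    (hp : IsWalkIn G univ p k) (hq : IsWalkIn G univ q m) (hpinj : InjOn p (Iic k))
    (hqinj : InjOn q (Iic m)) (h0 : p 0 = q 0) (hend : p k = q m)
    (hdisj : ∀ i, 0 < i → i < k → ∀ j ≤ m, p i ≠ q j) : G.Adj (p 0) (p k) := by
  set f : ℕ → V := fun t => if t ≤ k then p t else q (k + m - t)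
  have hwalk : IsWalkIn G univ f (k + m - 1) := hp.append_reverse hq hend (by omega)
  have hcross : ∀ i ≤ k, ∀ j, 0 < j → j < m → p i ≠ q j := by
    intro i hi j hj0 hjm heq
    rcases (show i = 0 ∨ i = k ∨ (0 < i ∧ i < k) by omega) with rfl | rfl | ⟨hi0, hik⟩
    · have := hqinj (mem_Iic.mpr (Nat.zero_le m)) (mem_Iic.mpr hjm.le) (h0.symm.trans heq)
      omega
    · have := hqinj (mem_Iic.mpr le_rfl) (mem_Iic.mpr hjm.le) (hend.symm.trans heq)
      omega
    · exact hdisj i hi0 hik j hjm.le heq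
  have hinj : InjOn f (Iic (k + m - 1)) := by
    intro s hs t ht hst
    simp only [mem_Iic] at hs ht
    simp only [f] at hst
    split_ifs at hst with hsk htk htk
    · exact hpinj (mem_Iic.mpr hsk) (mem_Iic.mpr htk) hst
    · exact absurd hst (hcross s hsk _ (by omega) (by omega))
    · exact absurd hst.symm (hcross t htk _ (by omega) (by omega))
    · have := hqinj (mem_Iic.mpr (show k + m - s ≤ m by omega))
        (mem_Iic.mpr (show k + m - t ≤ m by omega)) hst
      omega
  have hclose : G.Adj (f (k + m - 1)) (f 0) := by
    simp only [f, if_neg (show ¬ k + m - 1 ≤ k by omega), if_pos (Nat.zero_le k), h0,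
      show k + m - (k + m - 1) = 1 by omega]
    exact (hq.2 0 (by omega)).symm
  have hf0k : f 0 ≠ f k := fun h => by
    have := hinj (mem_Iic.mpr (Nat.zero_le _)) (mem_Iic.mpr (show k ≤ k + m - 1 by omega)) h
    omega
  have := isClique_image_of_cycle hcyc hdia (k + m - 1) f (by omega) hwalk hinj hclose
    (mem_image_of_mem f (mem_Iic.mpr (Nat.zero_le _)))
    (mem_image_of_mem f (mem_Iic.mpr (show k ≤ k + m - 1 by omega))) hf0k
  simpa [f] using this

lemma exists_walk_avoiding_of_not_preconnected_inter {J J' : Set V}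
    (hJ : (G.induce J).Preconnected) (h : ¬ (G.induce (J ∩ J')).Preconnected) :
    ∃ u v : ↥(J ∩ J'), ¬ (G.induce (J ∩ J')).Reachable u v ∧ ∃ k p, IsWalkIn G J p k ∧
      InjOn p (Iic k) ∧ p 0 = u ∧ p k = v ∧ ∀ i, 0 < i → i < k → p i ∉ J' := by
  classical
  -- a shortest walk in `J` between two components of `G.induce (J ∩ J')`
  have hex : ∃ k, ∃ u v : ↥(J ∩ J'), ¬ (G.induce (J ∩ J')).Reachable u v ∧
      ∃ p, IsWalkIn G J p k ∧ p 0 = u ∧ p k = v := by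
    obtain ⟨u, v, huv⟩ : ∃ u v, ¬ (G.induce (J ∩ J')).Reachable u v := by
      simpa only [Preconnected, not_forall] using h
    obtain ⟨k, p, hp, hp0, hpk⟩ := IsWalkIn.exists_of_reachable (hJ ⟨u, u.2.1⟩ ⟨v, v.2.1⟩)
    exact ⟨k, u, v, huv, p, hp, hp0, hpk⟩
  obtain ⟨u, v, huv, p, hp, hp0, hpk⟩ := Nat.find_spec hex
  have hmin : ∀ k' < Nat.find hex, _ := fun k' hk' => Nat.find_min hex hk'
  refine ⟨u, v, huv, _, p, hp, hp.injOn_of_minimal fun k' hk' p' hp' h0 hk =>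
    hmin k' hk' ⟨u, v, huv, p', hp', h0.trans hp0, hk.trans hpk⟩, hp0, hpk,
    fun i hi0 hik hiJ' => ?_⟩
  let w : ↥(J ∩ J') := ⟨p i, hp.1 i hik.le, hiJ'⟩
  by_cases huw : (G.induce (J ∩ J')).Reachable u w
  · refine hmin (Nat.find hex - i) (by omega)
      ⟨w, v, fun hwv => huv (huw.trans hwv), _, hp.drop hik.le, by simp [w], ?_⟩
    simp only [show i + (Nat.find hex - i) = Nat.find hex by omega, hpk]
  · exact hmin i hik ⟨u, w, huw, p, hp.take hik.le, hp0, rfl⟩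

end

theorem stmt14_general {V : Type*} (G : SimpleGraph V)
    (hcyc : ∀ I : Set V, ∀ k : ℕ, 4 ≤ k → ¬ Nonempty (G.induce I ≃g cycleGraph k))
    (hdia : ∀ I : Set V, ¬ Nonempty (G.induce I ≃g diamondGraph)) :
    ∀ J J' : Set V, (G.induce J).Connected → (G.induce J').Connected →
      (G.induce (J ∪ J')).Connected → (J ∩ J').Nonempty →
      (G.induce (J ∩ J')).Connected := by
  intro J J' hJ hJ' _ hJJ'
  have hcyc' : ∀ k, 4 ≤ k → ¬ cycleGraph k ⊴ G :=
    fun k hk => not_isIndContained_of_forall_not_iso (hcyc · k hk)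
  refine (connected_iff _).mpr ⟨?_, hJJ'.to_subtype⟩
  by_contra hT
  obtain ⟨u, v, huv, k, p, hp, hpinj, hp0, hpk, hpJ'⟩ :=
    exists_walk_avoiding_of_not_preconnected_inter hJ.preconnected hT
  obtain ⟨m, q, hq, hqinj, hq0, hqm⟩ :=
    IsWalkIn.exists_injOn_of_reachable (hJ'.preconnected ⟨u, u.2.2⟩ ⟨v, v.2.2⟩)
  have hne : (u : V) ≠ v := fun h => huv (Subtype.ext h ▸ Reachable.refl _)
  have hnadj : ¬ G.Adj u v := fun h => huv (Adj.reachable h)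
  have hk : 1 ≤ k := Nat.one_le_iff_ne_zero.mpr fun h => hne (by rw [← hp0, ← hpk, h])
  have hm : 2 ≤ m := by
    rcases (show m = 0 ∨ m = 1 ∨ 2 ≤ m by omega) with rfl | rfl | hm
    · exact absurd (hq0.symm.trans hqm) hne
    · exact absurd (hq0 ▸ hqm ▸ hq.2 0 one_pos) hnadj
    · exact hm
  refine hnadj ?_
  simpa [hp0, hpk] using adj_of_internally_disjoint_walks hcyc'
    (not_isIndContained_of_forall_not_iso hdia) hk hm (hp.mono (Set.subset_univ _))
    (hq.mono (Set.subset_univ _)) hpinj hqinj (hp0.trans hq0.symm) (hpk.trans hqm.symm)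
    fun i hi hik j hj heq => hpJ' i hi hik (heq ▸ hq.1 j hj)

theorem stmt14 {V : Type*} [Fintype V] (G : SimpleGraph V)
    (hcyc : ∀ I : Set V, ∀ k : ℕ, 4 ≤ k → ¬ Nonempty (G.induce I ≃g cycleGraph k))
    (hdia : ∀ I : Set V, ¬ Nonempty (G.induce I ≃g diamondGraph))
    (hclaw : ∀ I : Set V, ¬ Nonempty (G.induce I ≃g clawGraph)) :
    ∀ J J' : Set V, (G.induce J).Connected → (G.induce J').Connected →
      (G.induce (J ∪ J')).Connected → (J ∩ J').Nonempty →
      (G.induce (J ∩ J')).Connected :=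
  stmt14_general G hcyc hdia
end
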